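/- (Change of basis.) In the setting of the previous statement, define ψ : C⊗R_X⊗Ξ_X → C⊗R_X⊗Ξ_X by: on the summand C⊗x_Z·F⊗Ξ_X (for Z ⊆ X, x_Z = ∏_{z∈Z}x_z), ψ is the composite of the identification x_Z·F ≅ 1·F with the operator ρ'(x_Z) = ∏_{z∈Z}(ρ_C(z)⊗1⊗1 + 1⊗z⊗1). Then ψ² = Id, and ψ is an R_X-linear chain isomorphism from (C̄, ρ_{C̄}) to (C̄', ρ_{C̄'}) (and hence also from (C̄', ρ_{C̄'}) to (C̄, ρ_{C̄})). -/

import Mathlib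

/-!
STATEMENT 7 (Change of basis): In the setting of Statement 6, the map ψ on
C̄ = C ⊗ R_X ⊗ Ξ_X determined by: ψ is the identity on the summand C ⊗ 1·F ⊗ Ξ_X,
and on the summand C ⊗ x_Z·F ⊗ Ξ_X it is the composite of the identification
x_Z·F ≅ 1·F with ρ'(x_Z) = ∏_{z ∈ Z}(ρ_C(z)⊗1⊗1 + 1⊗z⊗1)  (equivalently,
ψ((x_z·r)⊗ξ⊗c) = ρ'(x_z)(ψ(r⊗ξ⊗c)) for every generator x_z), satisfies ψ² = Id and
is an R_X-linear chain isomorphism from (C̄, ∂+φ, ρ_{C̄}) to (C̄', ∂, ρ_{C̄'}).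
-/

set_option synthInstance.maxHeartbeats 1000000
set_option maxHeartbeats 1000000
set_option linter.unusedSectionVars false

noncomputable section
open scoped TensorProduct

abbrev F2 := ZMod 2

abbrev Rgen (X : Type) : Type :=
  MvPolynomial X F2 ⧸
    Ideal.span (Set.range fun x : X => (MvPolynomial.X x : MvPolynomial X F2) ^ 2)

def rgen {X : Type} (x : X) : Rgen X := Ideal.Quotient.mk _ (MvPolynomial.X x)

abbrev XiX (X : Type) : Type := (X →₀ ℕ) →₀ F2

def xiMul {X : Type} [DecidableEq X] (x : X) : XiX X →ₗ[F2] XiX X :=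
  Finsupp.lsum F2 fun n =>
    if n x = 0 then (0 : F2 →ₗ[F2] XiX X)
    else Finsupp.lsingle (n - Finsupp.single x 1)

def IsBddAboveComplex (C : Type) [AddCommGroup C] [Module F2 C]
    (d : C →ₗ[F2] C) : Prop :=
  d.comp d = 0 ∧
  ∃ Cdeg : ℤ → Submodule F2 C,
    DirectSum.IsInternal Cdeg ∧
    (∃ N : ℤ, ∀ n : ℤ, N < n → Cdeg n = ⊥) ∧
    ∀ n : ℤ, ∀ c ∈ Cdeg n, d c ∈ Cdeg (n + 1)

variable (X : Type) [Fintype X] [DecidableEq X]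
variable (C : Type) [AddCommGroup C] [Module F2 C]

abbrev Cbar : Type := (Rgen X ⊗[F2] XiX X) ⊗[F2] C

/-- `∂ = ∂_C ⊗ 1 ⊗ 1 + Σ_x 1 ⊗ x ⊗ ξ_x`  (the differential of `C̄'`). -/
def delPart (d : C →ₗ[F2] C) : Cbar X C →ₗ[F2] Cbar X C :=
  TensorProduct.map LinearMap.id d +
    ∑ x : X, TensorProduct.map
      (TensorProduct.map (LinearMap.mulLeft F2 (rgen x)) (xiMul x)) LinearMap.id

/-- `φ = Σ_x ρ_C(x) ⊗ 1 ⊗ ξ_x`  (so `∂ + φ` is the differential of `C̄`). -/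
def phiPart (ρ : X → C →ₗ[F2] C) : Cbar X C →ₗ[F2] Cbar X C :=
  ∑ x : X, TensorProduct.map (TensorProduct.map LinearMap.id (xiMul x)) (ρ x)

/-- The action `ρ_{C̄}(x) = 1 ⊗ x ⊗ 1` of `R_X` on the middle factor. -/
def rhoMid (x : X) : Cbar X C →ₗ[F2] Cbar X C :=
  TensorProduct.map
    (TensorProduct.map (LinearMap.mulLeft F2 (rgen x)) LinearMap.id) LinearMap.id

/-- The twisted action `ρ_{C̄'}(x) = ρ_C(x) ⊗ 1 ⊗ 1 + 1 ⊗ x ⊗ 1`. -/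
def rhoTw (ρ : X → C →ₗ[F2] C) (x : X) : Cbar X C →ₗ[F2] Cbar X C :=
  TensorProduct.map LinearMap.id (ρ x) + rhoMid X C x


/-! ### Auxiliary constructions for the proof -/

lemma addSelfF2 {M : Type*} [AddCommMonoid M] [Module F2 M] (v : M) : v + v = 0 := by
  have h := two_smul F2 v
  rw [show (2 : F2) = 0 by decide, zero_smul] at h
  exact h.symm

lemma eqAddOf {M : Type*} [AddCommMonoid M] [Module F2 M] {a b c : M}
    (h : a + b = c) : a = c + b := by
  rw [← h, add_assoc, addSelfF2, add_zero]

abbrev Igen (X : Type) : Ideal (MvPolynomial X F2) :=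
  Ideal.span (Set.range fun x : X => (MvPolynomial.X x : MvPolynomial X F2) ^ 2)

lemma pderiv_mem {X : Type} (z : X) {p : MvPolynomial X F2} (hp : p ∈ Igen X) :
    MvPolynomial.pderiv z p ∈ Igen X := by
  refine Submodule.span_induction ?_ ?_ ?_ ?_ hp
  · rintro q ⟨x, rfl⟩
    have : MvPolynomial.pderiv z ((MvPolynomial.X x : MvPolynomial X F2) ^ 2) = 0 := by
      rw [sq, MvPolynomial.pderiv_mul]
      by_cases h : x = z
      · subst h
        rw [MvPolynomial.pderiv_X_self, mul_one, one_mul]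
        exact addSelfF2 _
      · rw [MvPolynomial.pderiv_X_of_ne h, mul_zero, zero_mul, add_zero]
    rw [this]; exact Submodule.zero_mem _
  · simp
  · intro a b _ _ ha hb
    rw [map_add]; exact Submodule.add_mem _ ha hb
  · intro a q hq hDq
    rw [smul_eq_mul, MvPolynomial.pderiv_mul]
    exact Submodule.add_mem _ (Ideal.mul_mem_left _ _ hq) (Ideal.mul_mem_left _ _ hDq)

def Dz {X : Type} (z : X) : Rgen X →ₗ[F2] Rgen X :=
  Submodule.liftQ ((Igen X).restrictScalars F2)
    (((Igen X).mkQ.restrictScalars F2) ∘ₗ (MvPolynomial.pderiv z).toLinearMap)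
    (fun p hp => by
      simp only [LinearMap.mem_ker, LinearMap.comp_apply, LinearMap.restrictScalars_apply,
        Submodule.mkQ_apply, Submodule.Quotient.mk_eq_zero]
      exact pderiv_mem z hp)

lemma Dz_mk {X : Type} (z : X) (p : MvPolynomial X F2) :
    Dz z (Ideal.Quotient.mk (Igen X) p) =
      Ideal.Quotient.mk (Igen X) (MvPolynomial.pderiv z p) := rfl

lemma Dz_one {X : Type} (z : X) : Dz z (1 : Rgen X) = 0 := by
  have : (1 : Rgen X) = Ideal.Quotient.mk (Igen X) 1 := rfl
  rw [this, Dz_mk, MvPolynomial.pderiv_one, map_zero]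

lemma mk_surj {X : Type} (r : Rgen X) : ∃ p, Ideal.Quotient.mk (Igen X) p = r :=
  Ideal.Quotient.mk_surjective r

lemma rgen_mul_mk {X : Type} (z : X) (p : MvPolynomial X F2) :
    rgen z * Ideal.Quotient.mk (Igen X) p =
      Ideal.Quotient.mk (Igen X) (MvPolynomial.X z * p) := by
  rw [rgen, ← map_mul]

/-- `D_z M_z + M_z D_z = 1` on `Rgen X`. -/
lemma DM_self {X : Type} (z : X) :
    (Dz z) * (LinearMap.mulLeft F2 (rgen z)) + (LinearMap.mulLeft F2 (rgen z)) * (Dz z)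
      = (1 : Module.End F2 (Rgen X)) := by
  apply LinearMap.ext
  intro r
  obtain ⟨p, rfl⟩ := mk_surj r
  simp only [LinearMap.add_apply, Module.End.mul_apply, LinearMap.mulLeft_apply,
    Module.End.one_apply, rgen_mul_mk, Dz_mk]
  rw [MvPolynomial.pderiv_mul, MvPolynomial.pderiv_X_self, one_mul, map_add, map_mul,
    ← rgen, add_assoc, addSelfF2, add_zero]

/-- `D_z M_w = M_w D_z` for `z ≠ w`. -/
lemma DM_ne {X : Type} {z w : X} (h : w ≠ z) :
    (Dz z) * (LinearMap.mulLeft F2 (rgen w)) =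
      (LinearMap.mulLeft F2 (rgen w)) * (Dz z : Module.End F2 (Rgen X)) := by
  apply LinearMap.ext
  intro r
  obtain ⟨p, rfl⟩ := mk_surj r
  simp only [Module.End.mul_apply, LinearMap.mulLeft_apply, rgen_mul_mk, Dz_mk]
  rw [MvPolynomial.pderiv_mul, MvPolynomial.pderiv_X_of_ne h, zero_mul, zero_add,
    map_mul, ← rgen]

lemma pderiv_pderiv {X : Type} (z w : X) (p : MvPolynomial X F2) :
    MvPolynomial.pderiv z (MvPolynomial.pderiv w p) =
      MvPolynomial.pderiv w (MvPolynomial.pderiv z p) := by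
  induction p using MvPolynomial.induction_on with
  | C a => simp
  | add p q hp hq => simp [hp, hq]
  | mul_X p n hp =>
      by_cases hz : n = z
      · subst hz
        by_cases hw : n = w
        · subst hw; rfl
        · simp only [MvPolynomial.pderiv_mul, MvPolynomial.pderiv_X_self,
            MvPolynomial.pderiv_X_of_ne hw, map_add, MvPolynomial.pderiv_mul,
            mul_one, mul_zero, zero_mul, add_zero, zero_add, hp]
      · by_cases hw : n = w
        · subst hw
          simp only [MvPolynomial.pderiv_mul, MvPolynomial.pderiv_X_self,
            MvPolynomial.pderiv_X_of_ne hz, map_add, mul_one, mul_zero, zero_mul,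
            add_zero, zero_add, hp]
        · simp only [MvPolynomial.pderiv_mul, MvPolynomial.pderiv_X_of_ne hz,
            MvPolynomial.pderiv_X_of_ne hw, map_add, mul_one, mul_zero, zero_mul,
            add_zero, zero_add, hp]

/-- partial derivatives commute on `Rgen X`. -/
lemma DD_comm {X : Type} (z w : X) :
    (Dz z) * (Dz w) = (Dz w) * (Dz z : Module.End F2 (Rgen X)) := by
  apply LinearMap.ext
  intro r
  obtain ⟨p, rfl⟩ := mk_surj r
  simp only [Module.End.mul_apply, Dz_mk]
  rw [pderiv_pderiv]

/-- The basic triple-tensor endomorphism of `Cbar`. -/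
def T3 (a : Module.End F2 (Rgen X)) (b : Module.End F2 (XiX X)) (c : Module.End F2 C) :
    Module.End F2 (Cbar X C) :=
  TensorProduct.map (TensorProduct.map a b) c

lemma T3_mul (a a' : Module.End F2 (Rgen X)) (b b' : Module.End F2 (XiX X))
    (c c' : Module.End F2 C) :
    T3 X C a b c * T3 X C a' b' c' = T3 X C (a * a') (b * b') (c * c') := by
  simp only [T3, Module.End.mul_eq_comp, ← TensorProduct.map_comp]

lemma T3_one : T3 X C 1 1 1 = 1 := by
  simp only [T3, Module.End.one_eq_id, TensorProduct.map_id]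

lemma T3_snd (c : Module.End F2 C) : T3 X C 1 1 c = TensorProduct.map LinearMap.id c := by
  simp only [T3, Module.End.one_eq_id, TensorProduct.map_id]

lemma T3_add_left (a a' : Module.End F2 (Rgen X)) (b : Module.End F2 (XiX X))
    (c : Module.End F2 C) :
    T3 X C (a + a') b c = T3 X C a b c + T3 X C a' b c := by
  simp only [T3, TensorProduct.map_add_left]

lemma T3_zero_right (a : Module.End F2 (Rgen X)) (b : Module.End F2 (XiX X)) :
    T3 X C a b 0 = 0 := by
  simp only [T3, TensorProduct.map_zero_right]



lemma commute_one_add {M : Type*} [AddCommMonoid M] [Module F2 M]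
    {a b : Module.End F2 M} (h : Commute a b) :
    Commute (1 + a) (1 + b) :=
  (Commute.one_right _).add_right ((Commute.one_left _).add_left h)

lemma T3_comm {a a' : Module.End F2 (Rgen X)} {b b' : Module.End F2 (XiX X)}
    {c c' : Module.End F2 C} (ha : a * a' = a' * a) (hb : b * b' = b' * b)
    (hc : c * c' = c' * c) : Commute (T3 X C a b c) (T3 X C a' b' c') := by
  show _ = _
  rw [T3_mul, T3_mul, ha, hb, hc]

/-- generic: a product of factors `1 + g z` fixes any vector killed by all `g z`. -/
lemma nc_fix {M : Type*} [AddCommMonoid M] [Module F2 M] {ι : Type*} [DecidableEq ι]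
    (g : ι → Module.End F2 M) (v : M) (hv : ∀ z, g z v = 0) :
    ∀ (s : Finset ι) (comm), (s.noncommProd (fun z => 1 + g z) comm) v = v := by
  intro s
  induction s using Finset.induction_on with
  | empty => intro comm; simp [Finset.noncommProd_empty]
  | @insert a s ha ih =>
      intro comm
      rw [Finset.noncommProd_insert_of_notMem _ _ _ _ ha, Module.End.mul_apply, ih,
        LinearMap.add_apply, Module.End.one_apply, hv, add_zero]

/-- generic: a product of pairwise-commuting factors `1 + g z` with `g z * g z = 0`
squares to `1` in characteristic 2. -/
lemma nc_sq {M : Type*} [AddCommMonoid M] [Module F2 M] {ι : Type*} [DecidableEq ι]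
    (g : ι → Module.End F2 M) (hgc : ∀ z w, Commute (g z) (g w))
    (hgg : ∀ z, g z * g z = 0) :
    ∀ (s : Finset ι) (comm),
      s.noncommProd (fun z => 1 + g z) comm * s.noncommProd (fun z => 1 + g z) comm = 1 := by
  intro s
  induction s using Finset.induction_on with
  | empty => intro comm; simp [Finset.noncommProd_empty]
  | @insert a s ha ih =>
      intro comm
      rw [Finset.noncommProd_insert_of_notMem _ _ _ _ ha]
      have hcP : Commute (1 + g a) (Finset.noncommProd s (fun z => 1 + g z)
          (comm.mono fun _ => Finset.mem_insert_of_mem)) :=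
        (Finset.noncommProd_commute _ _ _ _ fun w _ =>
          commute_one_add (hgc a w))
      rw [Commute.mul_mul_mul_comm hcP.symm, ih]
      have hsq1 : (1 + g a) * (1 + g a) = 1 := by
        rw [mul_add, mul_one, add_mul, one_mul, hgg, add_zero, add_assoc,
          addSelfF2, add_zero]
      rw [hsq1, one_mul]

theorem stmt7
    (d : C →ₗ[F2] C) (ρ : X → C →ₗ[F2] C)
    (hC : IsBddAboveComplex C d)
    (hsq : ∀ x, (ρ x).comp (ρ x) = 0)
    (hcomm : ∀ x y, (ρ x).comp (ρ y) = (ρ y).comp (ρ x))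
    (hchain : ∀ x, (ρ x).comp d = d.comp (ρ x)) :
    ∃ ψ : Cbar X C →ₗ[F2] Cbar X C,
      -- ψ is the identity on the summand C ⊗ 1·F ⊗ Ξ_X …
      (∀ (ξ : XiX X) (c : C),
        ψ (((1 : Rgen X) ⊗ₜ[F2] ξ) ⊗ₜ[F2] c) = ((1 : Rgen X) ⊗ₜ[F2] ξ) ⊗ₜ[F2] c) ∧
      -- … and intertwines multiplication by each generator x_z with ρ'(x_z),
      -- so on the summand C ⊗ x_Z·F ⊗ Ξ_X it is the identification with C ⊗ 1·F ⊗ Ξ_X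
      -- followed by ρ'(x_Z)
      (∀ (z : X) (r : Rgen X) (ξ : XiX X) (c : C),
        ψ (((rgen z * r) ⊗ₜ[F2] ξ) ⊗ₜ[F2] c) =
          rhoTw X C ρ z (ψ ((r ⊗ₜ[F2] ξ) ⊗ₜ[F2] c))) ∧
      -- ψ is an involution, in particular an isomorphism
      ψ.comp ψ = LinearMap.id ∧
      -- ψ is a chain map (C̄, ∂+φ) → (C̄', ∂)
      ψ.comp (delPart X C d + phiPart X C ρ) = (delPart X C d).comp ψ ∧
      -- ψ is R_X-linear from (C̄, ρ_{C̄}) to (C̄', ρ_{C̄'})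
      (∀ x : X, ψ.comp (rhoMid X C x) = (rhoTw X C ρ x).comp ψ) := by
  classical
  have hsq' : ∀ z, ρ z * ρ z = 0 := fun z => by
    rw [Module.End.mul_eq_comp]; exact hsq z
  have hcomm' : ∀ z w, ρ z * ρ w = ρ w * ρ z := fun z w => by
    rw [Module.End.mul_eq_comp, Module.End.mul_eq_comp]; exact hcomm z w
  have hchain' : ∀ z, ρ z * d = d * ρ z := fun z => by
    rw [Module.End.mul_eq_comp, Module.End.mul_eq_comp]; exact hchain z
  -- the basic operators
  set A : X → Module.End F2 (Cbar X C) := fun z => T3 X C (Dz z) 1 (ρ z) with hA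
  set Mz : X → Module.End F2 (Cbar X C) :=
    fun z => T3 X C (LinearMap.mulLeft F2 (rgen z)) 1 1 with hMz
  set Pz : X → Module.End F2 (Cbar X C) := fun z => T3 X C 1 1 (ρ z) with hPz
  set Xi : X → Module.End F2 (Cbar X C) :=
    fun x => T3 X C (LinearMap.mulLeft F2 (rgen x)) (xiMul x) 1 with hXi
  set Ph : X → Module.End F2 (Cbar X C) := fun x => T3 X C 1 (xiMul x) (ρ x) with hPh
  set Dd : Module.End F2 (Cbar X C) := T3 X C 1 1 d with hDd
  -- commutation of the basic factors
  have cAA : ∀ z w, Commute (A z) (A w) := fun z w =>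
    T3_comm X C (DD_comm z w) rfl (hcomm' z w)
  have hAsq : ∀ z, A z * A z = 0 := fun z => by
    rw [hA, T3_mul, one_mul, hsq' z, T3_zero_right]
  have c1A : ∀ z w, Commute (1 + A z) (1 + A w) := fun z w =>
    (Commute.one_right _).add_right ((Commute.one_left _).add_left (cAA z w))
  -- ψ and its factorizations
  set f : X → Module.End F2 (Cbar X C) := fun z => 1 + A z with hf
  have fcomm : (↑(Finset.univ : Finset X) : Set X).Pairwise (Function.onFun Commute f) :=
    fun z _ w _ _ => c1A z w
  set ψ : Module.End F2 (Cbar X C) := Finset.univ.noncommProd f fcomm with hψ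
  have ecomm : ∀ z : X,
      (↑((Finset.univ : Finset X).erase z) : Set X).Pairwise (Function.onFun Commute f) :=
    fun z a _ b _ _ => c1A a b
  set E : X → Module.End F2 (Cbar X C) :=
    fun z => ((Finset.univ : Finset X).erase z).noncommProd f (ecomm z) with hE
  have ψ_eq : ∀ z, ψ = f z * E z := fun z =>
    (Finset.mul_noncommProd_erase Finset.univ (Finset.mem_univ z) f fcomm (ecomm z)).symm
  have commE : ∀ (z : X) (B : Module.End F2 (Cbar X C)),
      (∀ w, w ≠ z → Commute B (A w)) → Commute B (E z) := by
    intro z B hB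
    exact Finset.noncommProd_commute _ _ _ _ fun w hw =>
      (Commute.one_right B).add_right (hB w (Finset.ne_of_mem_erase hw))
  have commψ : ∀ (B : Module.End F2 (Cbar X C)),
      (∀ w, Commute B (A w)) → Commute B ψ := by
    intro B hB
    exact Finset.noncommProd_commute _ _ _ _ fun w _ =>
      (Commute.one_right B).add_right (hB w)
  -- the single-factor exchange relations
  have hAM : ∀ z, A z * Mz z = Pz z + Mz z * A z := by
    intro z
    refine eqAddOf (M := Cbar X C →ₗ[F2] Cbar X C) ?_
    simp only [hA, hMz, hPz]
    rw [T3_mul, T3_mul]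
    simp only [one_mul, mul_one]
    rw [← T3_add_left, DM_self]
  have hPA : ∀ z, Pz z * A z = 0 := fun z => by
    rw [hA, hPz, T3_mul, hsq' z, T3_zero_right]
  have keyfacM : ∀ z, f z * Mz z = (Pz z + Mz z) * f z := by
    intro z
    have e1 : f z * Mz z = Mz z + A z * Mz z := by
      rw [hf]; simp only; rw [add_mul, one_mul]
    have e2 : (Pz z + Mz z) * f z = Pz z + Mz z + (Pz z * A z + Mz z * A z) := by
      rw [hf]; simp only; rw [mul_add, mul_one, add_mul]
    rw [e1, e2, hAM z, hPA z, zero_add]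
    abel
  have key : ∀ z, ψ * Mz z = (Pz z + Mz z) * ψ := by
    intro z
    have cME : Commute (Mz z) (E z) := by
      refine commE z _ fun w hw => T3_comm X C ?_ rfl rfl
      exact (DM_ne fun h => hw h.symm).symm
    rw [ψ_eq z, mul_assoc, ← cME.eq, ← mul_assoc, keyfacM z, mul_assoc]
  -- relations for the chain-map property
  have cdA : ∀ z, Commute Dd (A z) := fun z =>
    T3_comm X C rfl rfl (hchain' z).symm
  have hAXi : ∀ x, A x * Xi x = Ph x + Xi x * A x := by
    intro x
    refine eqAddOf (M := Cbar X C →ₗ[F2] Cbar X C) ?_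
    simp only [hA, hXi, hPh]
    rw [T3_mul, T3_mul]
    simp only [one_mul, mul_one]
    rw [← T3_add_left, DM_self]
  have hAPh : ∀ x, A x * Ph x = 0 := fun x => by
    rw [hA, hPh, T3_mul, hsq' x, T3_zero_right]
  have keyfacXi : ∀ x, f x * (Xi x + Ph x) = Xi x * f x := by
    intro x
    have e1 : f x * (Xi x + Ph x) = Xi x + Ph x + (A x * Xi x + A x * Ph x) := by
      rw [hf]; simp only; rw [add_mul, one_mul, mul_add]
    have e2 : Xi x * f x = Xi x + Xi x * A x := by
      rw [hf]; simp only; rw [mul_add, mul_one]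
    rw [e1, e2, hAXi x, hAPh x, add_zero]
    have e3 : Xi x + Ph x + (Ph x + Xi x * A x)
        = Xi x + (Ph x + Ph x + Xi x * A x) := by abel
    rw [e3, addSelfF2 (M := Cbar X C →ₗ[F2] Cbar X C) (Ph x), zero_add]
  have hXiPh : ∀ x, ψ * (Xi x + Ph x) = Xi x * ψ := by
    intro x
    have cXiE : Commute (Xi x) (E x) := by
      refine commE x _ fun w hw => T3_comm X C ?_ (by rw [one_mul, mul_one]) rfl
      exact (DM_ne fun h => hw h.symm).symm
    have cPhE : Commute (Ph x) (E x) := by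
      refine commE x _ fun w _ => T3_comm X C rfl (by rw [one_mul, mul_one])
        (hcomm' x w)
    have cE : Commute (Xi x + Ph x) (E x) := cXiE.add_left cPhE
    rw [ψ_eq x, mul_assoc, ← cE.eq, ← mul_assoc, keyfacXi x, mul_assoc]
  -- assemble
  refine ⟨ψ, ?_, ?_, ?_, ?_, ?_⟩
  · -- identity on the summand with 1 in the R-factor
    intro ξ c
    refine nc_fix A _ ?_ Finset.univ fcomm
    intro z
    rw [hA]
    simp only [T3, TensorProduct.map_tmul, Dz_one, TensorProduct.zero_tmul]
  · -- the generator exchange rule, pointwise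
    intro z r ξ c
    have h1 := congrArg (fun g : Module.End F2 (Cbar X C) => g ((r ⊗ₜ[F2] ξ) ⊗ₜ[F2] c))
      (key z)
    simp only [Module.End.mul_apply] at h1
    have hM : Mz z ((r ⊗ₜ[F2] ξ) ⊗ₜ[F2] c) = ((rgen z * r) ⊗ₜ[F2] ξ) ⊗ₜ[F2] c := by
      simp only [hMz, T3, TensorProduct.map_tmul, LinearMap.mulLeft_apply,
        Module.End.one_apply]
    have hTw : rhoTw X C ρ z = Pz z + Mz z := by
      simp only [hPz, hMz]
      rw [rhoTw, T3_snd]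
      rfl
    rw [hM] at h1
    rw [h1, hTw]
  · -- involution
    rw [← Module.End.mul_eq_comp, hψ, nc_sq A cAA hAsq Finset.univ fcomm]
    rfl
  · -- chain map
    have hdel : delPart X C d = Dd + ∑ x, Xi x := by
      simp only [hDd, hXi]
      rw [delPart, T3_snd]
      rfl
    have hphi : phiPart X C ρ = ∑ x, Ph x := by
      simp only [hPh]
      rfl
    rw [← Module.End.mul_eq_comp, ← Module.End.mul_eq_comp, hdel, hphi]
    have h1 : ψ * Dd = Dd * ψ := ((commψ Dd cdA).symm).eq
    have h2 : ψ * (∑ x, Xi x) + ψ * (∑ x, Ph x) = (∑ x, Xi x) * ψ := by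
      rw [Finset.mul_sum, Finset.mul_sum, Finset.sum_mul, ← Finset.sum_add_distrib]
      refine Finset.sum_congr rfl fun x _ => ?_
      have h3 := hXiPh x
      rwa [mul_add] at h3
    rw [mul_add, mul_add, add_mul, add_assoc, h2, h1]
  · -- R_X-linearity
    intro x
    have hTw : rhoTw X C ρ x = Pz x + Mz x := by
      simp only [hPz, hMz]
      rw [rhoTw, T3_snd]
      rfl
    have hMid : rhoMid X C x = Mz x := by
      simp only [hMz]
      rfl
    rw [← Module.End.mul_eq_comp, ← Module.End.mul_eq_comp, hTw, hMid]
    exact key x
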